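/- arXiv:2508.03299 — 2 statements merged into one kernel-verified Lean document; each statement's English description precedes it below -/
import Mathlib

section
/- Let ζ = exp(2πi/5) ∈ ℂ. Then (1 + ζ²)^5 = -(11 - 5·√5)/2. -/
open Complex
open scoped Real goldenRatio

/-! Since `1 + ζ² = ζ (ζ + ζ⁻¹) = 2 cos(2π/5) ζ` and `ζ⁵ = 1`, the left side is `(2 cos(2π/5))⁵`.
Now `2 cos(2π/5) = -ψ` for the conjugate golden ratio `ψ = (1 - √5)/2`, and
`ψ⁵ = F₅ ψ + F₄ = 5ψ + 3`. -/

lemma Real.goldenConj_pow_five : ψ ^ 5 = 5 * ψ + 3 := by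
  have h := goldenConj_mul_fib_succ_add_fib 4
  norm_num [Nat.fib_add_two] at h
  linarith

lemma Real.cos_two_pi_div_five : Real.cos (2 * π / 5) = -ψ / 2 := by
  rw [show 2 * π / 5 = 2 * (π / 5) by ring, Real.cos_two_mul, Real.cos_pi_div_five]
  linear_combination (1 / 2 : ℝ) * goldenRatio_sq + (1 / 2 : ℝ) * goldenRatio_add_goldenConj

lemma Complex.one_add_exp_mul_I_sq (x : ℂ) : 1 + exp (x * I) ^ 2 = 2 * cos x * exp (x * I) := by
  have h : exp (-x * I) * exp (x * I) = 1 := by rw [← exp_add, neg_mul, neg_add_cancel, exp_zero]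
  rw [two_cos, add_mul, h]
  ring

theorem stmt_1 :
    (1 + Complex.exp (2 * Real.pi * Complex.I / 5) ^ 2) ^ 5 =
      -((11 - 5 * (Real.sqrt 5 : ℂ)) / 2) := by
  have hζ5 : exp (2 * π / 5 * I) ^ 5 = 1 := by
    rw [← exp_nat_mul, ← exp_two_pi_mul_I]
    congr 1
    push_cast
    ring
  have hcos : (2 * cos (2 * π / 5)) ^ 5 = -((11 - 5 * (√5 : ℂ)) / 2) := by
    have h : (2 * Real.cos (2 * π / 5)) ^ 5 = -((11 - 5 * √5) / 2) := by
      rw [Real.cos_two_pi_div_five]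
      linear_combination -Real.goldenConj_pow_five
    exact_mod_cast h
  rw [show 2 * π * I / 5 = 2 * π / 5 * I by ring, one_add_exp_mul_I_sq, mul_pow, hζ5, mul_one, hcos]
end

section
/- Let J_k and J_l be unipotent Jordan blocks of sizes k and l over ℂ. Then rank(J_k ⊗ J_l - I_{kl}) = kl - min(k, l). Equivalently, the tensor product J_k ⊗ J_l is unipotent with exactly min(k,l) Jordan blocks. -/
open Matrix

/-- The `k × k` unipotent upper-triangular Jordan block with eigenvalue `1`. -/
def jordanBlock (k : ℕ) : Matrix (Fin k) (Fin k) ℂ :=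
  Matrix.of fun i j => if j = i then 1 else if (j : ℕ) = (i : ℕ) + 1 then 1 else 0

lemma jordan_sum (n : ℕ) (f : Fin n → ℂ) (a : Fin n) :
    ∑ j, jordanBlock n a j * f j
      = f a + (if h : (a : ℕ) + 1 < n then f ⟨a + 1, h⟩ else 0) := by
  have h1 : ∀ j : Fin n, jordanBlock n a j * f j
      = (if j = a then f j else 0) + (if (j : ℕ) = (a : ℕ) + 1 then f j else 0) := by
    intro j
    simp only [jordanBlock, of_apply]
    split_ifs with h h' h'
    · exact absurd (congrArg Fin.val h ▸ h') (by omega)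
    · ring
    · ring
    · ring
  rw [Finset.sum_congr rfl fun j _ => h1 j, Finset.sum_add_distrib]
  congr 1
  · simp
  · split_ifs with h
    · rw [Finset.sum_eq_single (⟨a + 1, h⟩ : Fin n)]
      · simp
      · intro j _ hj
        rw [if_neg]
        exact fun hc => hj (Fin.ext hc)
      · simp
    · apply Finset.sum_eq_zero
      intro j _
      rw [if_neg]
      omega

section Main

variable (k l : ℕ)

/-- extension of a vector on `Fin k × Fin l` to all of `ℕ × ℕ` by zero. -/
def extv (v : Fin k × Fin l → ℂ) (i j : ℕ) : ℂ :=
  if h : i < k ∧ j < l then v (⟨i, h.1⟩, ⟨j, h.2⟩) else 0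

abbrev Mkl : Matrix (Fin k × Fin l) (Fin k × Fin l) ℂ :=
  Matrix.kroneckerMap (· * ·) (jordanBlock k) (jordanBlock l) - 1

lemma mulVec_eq (v : Fin k × Fin l → ℂ) (a : ℕ) (b : ℕ) (ha : a < k) (hb : b < l) :
    (Mkl k l).mulVec v (⟨a, ha⟩, ⟨b, hb⟩)
      = extv k l v a (b + 1) + extv k l v (a + 1) b + extv k l v (a + 1) (b + 1) := by
  rw [Matrix.sub_mulVec, Matrix.one_mulVec]
  have hK : (Matrix.kroneckerMap (· * ·) (jordanBlock k) (jordanBlock l)).mulVec v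
        (⟨a, ha⟩, ⟨b, hb⟩)
      = ∑ i : Fin k, jordanBlock k ⟨a, ha⟩ i *
          ∑ j : Fin l, jordanBlock l ⟨b, hb⟩ j * v (i, j) := by
    rw [Matrix.mulVec, dotProduct, Fintype.sum_prod_type]
    simp only [Finset.mul_sum, kroneckerMap_apply, mul_assoc]
  rw [Pi.sub_apply, hK]
  have hinner : ∀ i : Fin k, ∑ j : Fin l, jordanBlock l ⟨b, hb⟩ j * v (i, j)
      = v (i, ⟨b, hb⟩) + (if h : b + 1 < l then v (i, ⟨b + 1, h⟩) else 0) := by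
    intro i
    exact jordan_sum l (fun j => v (i, j)) ⟨b, hb⟩
  simp only [hinner]
  rw [jordan_sum k (fun i => v (i, ⟨b, hb⟩) + (if h : b + 1 < l then v (i, ⟨b + 1, h⟩) else 0))
    ⟨a, ha⟩]
  simp only [extv, Fin.val_mk]
  split_ifs <;> (try ring)
  all_goals (exfalso; omega)

lemma extv_zero_of_left (v : Fin k × Fin l → ℂ) {i : ℕ} (j : ℕ) (hi : k ≤ i) :
    extv k l v i j = 0 := by
  rw [extv, dif_neg]; omega

lemma extv_zero_of_right (v : Fin k × Fin l → ℂ) (i : ℕ) {j : ℕ} (hj : l ≤ j) :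
    extv k l v i j = 0 := by
  rw [extv, dif_neg]; omega

lemma mem_ker_iff (v : Fin k × Fin l → ℂ) :
    v ∈ LinearMap.ker (Mkl k l).mulVecLin ↔
      ∀ a b : ℕ, extv k l v a (b + 1) + extv k l v (a + 1) b + extv k l v (a + 1) (b + 1) = 0 := by
  rw [LinearMap.mem_ker, Matrix.mulVecLin_apply]
  constructor
  · intro h a b
    by_cases ha : a < k
    · by_cases hb : b < l
      · rw [← mulVec_eq k l v a b ha hb, h]
        rfl
      · rw [extv_zero_of_right k l v a (by omega), extv_zero_of_right k l v (a+1) (by omega),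
          extv_zero_of_right k l v (a+1) (by omega)]
        ring
    · rw [extv_zero_of_left k l v (b+1) (by omega), extv_zero_of_left k l v b (by omega),
        extv_zero_of_left k l v (b+1) (by omega)]
      ring
  · intro h
    funext p
    obtain ⟨⟨a, ha⟩, ⟨b, hb⟩⟩ := p
    rw [mulVec_eq k l v a b ha hb, h a b]
    rfl

lemma ker_zero (v : Fin k × Fin l → ℂ)
    (hv : ∀ a b : ℕ, extv k l v a (b + 1) + extv k l v (a + 1) b + extv k l v (a + 1) (b + 1) = 0)
    (h0 : ∀ i : ℕ, extv k l v i 0 = 0) : v = 0 := by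
  have key : ∀ j i : ℕ, extv k l v i j = 0 := by
    intro j
    induction j with
    | zero => exact h0
    | succ j ih =>
      -- one-step relation in column `j+1`
      have step : ∀ a : ℕ, extv k l v a (j + 1) = - extv k l v (a + 1) (j + 1) := by
        intro a
        have := hv a j
        rw [ih (a + 1)] at this
        linear_combination this
      have aux : ∀ m i : ℕ, k ≤ i + m → extv k l v i (j + 1) = 0 := by
        intro m
        induction m with
        | zero => intro i hi; exact extv_zero_of_left k l v (j+1) (by omega)
        | succ m ihm =>
          intro i hi
          by_cases hik : k ≤ i
          · exact extv_zero_of_left k l v (j+1) hik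
          · rw [step i, ihm (i + 1) (by omega), neg_zero]
      intro i
      exact aux k i (by omega)
  funext p
  obtain ⟨⟨a, ha⟩, ⟨b, hb⟩⟩ := p
  have := key b a
  rw [extv, dif_pos ⟨ha, hb⟩] at this
  exact this

end Main

/-- explicit kernel vectors (as functions on `ℕ × ℕ`). -/
def Wnat (m i j : ℕ) : ℂ :=
  if j = 0 then (if i = m then 1 else 0)
  else if i < m then (-1) ^ (m - i) * (Nat.choose (m - 1 - i) (j - 1) : ℂ) else 0

lemma Wnat_j0 (m i : ℕ) : Wnat m i 0 = if i = m then 1 else 0 := by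
  rw [Wnat, if_pos rfl]

lemma Wnat_pos (m i j : ℕ) (hj : j ≠ 0) (him : i < m) :
    Wnat m i j = (-1) ^ (m - i) * (Nat.choose (m - 1 - i) (j - 1) : ℂ) := by
  rw [Wnat, if_neg hj, if_pos him]

lemma Wnat_zero (m i j : ℕ) (hj : j ≠ 0) (him : m ≤ i) : Wnat m i j = 0 := by
  rw [Wnat, if_neg hj, if_neg (by omega)]

lemma Wnat_rec (m a b : ℕ) :
    Wnat m a (b + 1) + Wnat m (a + 1) b + Wnat m (a + 1) (b + 1) = 0 := by
  by_cases ham : a + 1 < m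
  · have ha : a < m := by omega
    rw [Wnat_pos m a (b + 1) (by omega) ha, Wnat_pos m (a + 1) (b + 1) (by omega) ham]
    by_cases hb : b = 0
    · subst hb
      rw [Wnat_j0, if_neg (by omega)]
      simp only [Nat.add_sub_cancel]
      rw [Nat.choose_zero_right, Nat.choose_zero_right]
      rw [show m - a = (m - (a + 1)) + 1 by omega, pow_succ]
      push_cast; ring
    · obtain ⟨c, rfl⟩ : ∃ c, b = c + 1 := ⟨b - 1, by omega⟩
      rw [Wnat_pos m (a + 1) (c + 1) (by omega) ham]
      simp only [Nat.add_sub_cancel]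
      rw [show m - 1 - a = (m - 1 - (a + 1)) + 1 by omega, Nat.choose_succ_succ]
      rw [show m - a = (m - (a + 1)) + 1 by omega, pow_succ]
      push_cast; ring
  · by_cases ham2 : a + 1 = m
    · rw [Wnat_pos m a (b + 1) (by omega) (by omega),
        Wnat_zero m (a + 1) (b + 1) (by omega) (by omega)]
      by_cases hb : b = 0
      · subst hb
        rw [Wnat_j0, if_pos ham2]
        rw [show m - a = 1 by omega, show m - 1 - a = 0 by omega]
        simp only [Nat.add_sub_cancel, Nat.choose_zero_right]
        norm_num
      · obtain ⟨c, rfl⟩ : ∃ c, b = c + 1 := ⟨b - 1, by omega⟩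
        rw [Wnat_zero m (a + 1) (c + 1) (by omega) (by omega)]
        rw [show m - 1 - a = 0 by omega]
        simp only [Nat.add_sub_cancel, Nat.choose_zero_succ]
        norm_num
    · rw [Wnat_zero m a (b + 1) (by omega) (by omega),
        Wnat_zero m (a + 1) (b + 1) (by omega) (by omega)]
      by_cases hb : b = 0
      · subst hb
        rw [Wnat_j0, if_neg (by omega)]
        ring
      · rw [Wnat_zero m (a + 1) b hb (by omega)]
        ring

lemma extv_Wnat (k l m i j : ℕ) :
    extv k l (fun p : Fin k × Fin l => Wnat m p.1 p.2) i j
      = if i < k ∧ j < l then Wnat m i j else 0 := by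
  by_cases h : i < k ∧ j < l
  · rw [extv, dif_pos h, if_pos h]
  · rw [extv, dif_neg h, if_neg h]

lemma Wvec_mem (k l m : ℕ) (hmk : m < k) (hml : m < l) :
    (fun p : Fin k × Fin l => Wnat m p.1 p.2) ∈ LinearMap.ker (Mkl k l).mulVecLin := by
  rw [mem_ker_iff]
  intro a b
  rw [extv_Wnat, extv_Wnat, extv_Wnat]
  by_cases ha : a < k
  · by_cases hb : b < l
    · by_cases hbl : b + 1 < l
      · by_cases hak : a + 1 < k
        · rw [if_pos ⟨ha, hbl⟩, if_pos ⟨hak, hb⟩, if_pos ⟨hak, hbl⟩]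
          exact Wnat_rec m a b
        · rw [if_neg (show ¬(a + 1 < k ∧ b < l) by omega),
            if_neg (show ¬(a + 1 < k ∧ b + 1 < l) by omega), if_pos ⟨ha, hbl⟩]
          rw [Wnat_zero m a (b + 1) (by omega) (by omega)]
          ring
      · rw [if_neg (show ¬(a < k ∧ b + 1 < l) by omega),
          if_neg (show ¬(a + 1 < k ∧ b + 1 < l) by omega)]
        by_cases hak : a + 1 < k
        · rw [if_pos ⟨hak, hb⟩]
          by_cases hb0 : b = 0
          · subst hb0
            rw [Wnat_j0, if_neg (by omega)]
            ring
          · by_cases ham : a + 1 < m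
            · rw [Wnat_pos m (a + 1) b hb0 ham,
                Nat.choose_eq_zero_of_lt (show m - 1 - (a + 1) < b - 1 by omega)]
              norm_num
            · rw [Wnat_zero m (a + 1) b hb0 (by omega)]
              ring
        · rw [if_neg (show ¬(a + 1 < k ∧ b < l) by omega)]
          ring
    · rw [if_neg (show ¬(a < k ∧ b + 1 < l) by omega),
        if_neg (show ¬(a + 1 < k ∧ b < l) by omega),
        if_neg (show ¬(a + 1 < k ∧ b + 1 < l) by omega)]
      ring
  · rw [if_neg (show ¬(a < k ∧ b + 1 < l) by omega),
      if_neg (show ¬(a + 1 < k ∧ b < l) by omega),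
      if_neg (show ¬(a + 1 < k ∧ b + 1 < l) by omega)]
    ring

lemma finrank_ker (k l : ℕ) (hk : 0 < k) (hkl : k ≤ l) :
    Module.finrank ℂ (LinearMap.ker (Mkl k l).mulVecLin) = k := by
  have hl : 0 < l := lt_of_lt_of_le hk hkl
  set S := LinearMap.ker (Mkl k l).mulVecLin with hS
  let π : S →ₗ[ℂ] (Fin k → ℂ) :=
    (LinearMap.funLeft ℂ ℂ (fun m : Fin k => ((m, ⟨0, hl⟩) : Fin k × Fin l))).comp S.subtype
  have hinj : Function.Injective π := by
    rw [← LinearMap.ker_eq_bot, Submodule.eq_bot_iff]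
    rintro ⟨v, hv⟩ hπ
    have hπ0 : ∀ m : Fin k, v (m, ⟨0, hl⟩) = 0 := fun m =>
      congrFun (LinearMap.mem_ker.mp hπ) m
    have h0 : ∀ i : ℕ, extv k l v i 0 = 0 := by
      intro i
      by_cases hik : i < k
      · rw [extv, dif_pos ⟨hik, hl⟩]
        exact hπ0 ⟨i, hik⟩
      · exact extv_zero_of_left k l v 0 (by omega)
    exact Subtype.ext (ker_zero k l v ((mem_ker_iff k l v).mp hv) h0)
  have hsurj : Function.Surjective π := by
    intro c
    have hmem : (fun p : Fin k × Fin l => ∑ m : Fin k, c m * Wnat m p.1 p.2) ∈ S := by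
      have heq : (fun p : Fin k × Fin l => ∑ m : Fin k, c m * Wnat m p.1 p.2)
          = ∑ m : Fin k, c m • (fun p : Fin k × Fin l => Wnat (m : ℕ) p.1 p.2) := by
        funext p
        simp [Finset.sum_apply]
      rw [hS, heq]
      exact Submodule.sum_mem _ fun m _ =>
        Submodule.smul_mem _ _ (Wvec_mem k l m m.isLt (lt_of_lt_of_le m.isLt hkl))
    refine ⟨⟨_, hmem⟩, ?_⟩
    funext m'
    show (∑ m : Fin k, c m * Wnat m (m' : ℕ) ((⟨0, hl⟩ : Fin l) : ℕ)) = c m'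
    simp only [Wnat_j0]
    rw [Finset.sum_eq_single m']
    · simp
    · intro m _ hm
      rw [if_neg (fun hc => hm (Fin.ext hc).symm), mul_zero]
    · simp
  rw [LinearEquiv.finrank_eq (LinearEquiv.ofBijective π ⟨hinj, hsurj⟩)]
  simp

lemma rank_le_case (k l : ℕ) (hkl : k ≤ l) : (Mkl k l).rank = k * l - k := by
  rcases Nat.eq_zero_or_pos k with hk | hk
  · subst hk
    have h1 : (Mkl 0 l).rank ≤ 0 := by
      simpa using (Mkl 0 l).rank_le_card_width
    omega
  · have h2 := LinearMap.finrank_range_add_finrank_ker (Mkl k l).mulVecLin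
    rw [finrank_ker k l hk hkl] at h2
    have hdom : Module.finrank ℂ (Fin k × Fin l → ℂ) = k * l := by
      simp [Module.finrank_pi]
    rw [hdom] at h2
    have h3 : (Mkl k l).rank
        = Module.finrank ℂ (LinearMap.range (Mkl k l).mulVecLin) := rfl
    omega

theorem stmt_15 (k l : ℕ) :
    (Matrix.kroneckerMap (· * ·) (jordanBlock k) (jordanBlock l) - 1).rank =
      k * l - min k l := by
  rcases le_total k l with h | h
  · rw [min_eq_left h]
    exact rank_le_case k l h
  · have hswap : (Matrix.kroneckerMap (· * ·) (jordanBlock k) (jordanBlock l) - 1)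
        = (Mkl l k).submatrix (Equiv.prodComm (Fin k) (Fin l)) (Equiv.prodComm (Fin k) (Fin l)) := by
      ext ⟨i, j⟩ ⟨i', j'⟩
      simp only [Matrix.sub_apply, Matrix.kroneckerMap_apply, Matrix.submatrix_apply,
        Equiv.prodComm_apply, Prod.swap_prod_mk, Matrix.one_apply]
      have hiff : (((i, j) : Fin k × Fin l) = (i', j')) ↔ (((j, i) : Fin l × Fin k) = (j', i')) := by
        simp [Prod.ext_iff, and_comm]
      rw [mul_comm (jordanBlock k i i') (jordanBlock l j j')]
      by_cases hij : ((i, j) : Fin k × Fin l) = (i', j')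
      · rw [if_pos hij, if_pos (hiff.mp hij)]
      · rw [if_neg hij, if_neg (fun hc => hij (hiff.mpr hc))]
    rw [hswap, Matrix.rank_submatrix, min_eq_right h, rank_le_case l k h, Nat.mul_comm]
end
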